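/- arXiv:1504.06986 — 4 statements merged into one kernel-verified Lean document; each statement's English description precedes it below -/
import Mathlib

section
/- If a traffic snapshot TS = (res, clm, pos, spd, acc) satisfies the sanity conditions and TS' = (res, clm', pos, spd, acc) is obtained from TS by the claim-creation transition c(C, n) for a car C and lane n — i.e. clm(C) = ∅, |res(C)| = 1, res(C) ∩ {n−1, n+1} ≠ ∅, and clm' = clm except clm'(C) = {n} — then TS' also satisfies the sanity conditions. -/
/-- A traffic snapshot (Definition 2.1): car identifiers are natural numbers,
lanes are natural numbers. -/
structure TrafficSnapshot where
  res : ℕ → Set ℕ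
  clm : ℕ → Set ℕ
  pos : ℕ → ℝ
  spd : ℕ → ℝ
  acc : ℕ → ℝ

/-- The sanity conditions of Definition 2.1. -/
def Sane (TS : TrafficSnapshot) : Prop :=
  (∀ C, TS.res C ∩ TS.clm C = ∅) ∧
  (∀ C, 1 ≤ (TS.res C).ncard ∧ (TS.res C).ncard ≤ 2) ∧
  (∀ C, (TS.clm C).ncard ≤ 1) ∧
  (∀ C, 1 ≤ (TS.res C).ncard + (TS.clm C).ncard ∧
        (TS.res C).ncard + (TS.clm C).ncard ≤ 2) ∧
  (∀ C, TS.clm C ≠ ∅ → ∃ n, TS.res C ∪ TS.clm C = {n, n + 1}) ∧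
  Set.Finite {C | (TS.res C).ncard = 2 ∨ (TS.clm C).ncard = 1}

/-- Preservation of sanity under the claim-creation transition `c(C, n)`
(Lemma 2.4, case of `TS → c(C,n) → TS'`). -/
theorem claim_creation_preserves_sanity
    (TS TS' : TrafficSnapshot) (C n : ℕ)
    (hsane : Sane TS)
    (hclm : TS.clm C = ∅)
    (hres1 : (TS.res C).ncard = 1)
    (hadj : ∃ m ∈ TS.res C, m = n + 1 ∨ n = m + 1)
    (hres' : TS'.res = TS.res)
    (hclm' : TS'.clm = Function.update TS.clm C {n})
    (hpos' : TS'.pos = TS.pos)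
    (hspd' : TS'.spd = TS.spd)
    (hacc' : TS'.acc = TS.acc) :
    Sane TS' := by

  obtain ⟨hdisj, hres2, hclm1, hsum, hform, hfin⟩ := hsane
  obtain ⟨m, hm, hmn⟩ := hadj
  have hresC : TS.res C = {m} := by
    obtain ⟨a, ha⟩ := Set.ncard_eq_one.mp hres1
    rw [ha] at hm ⊢
    simp_all
  have hmn' : m ≠ n := by rcases hmn with h | h <;> omega
  refine ⟨?_, ?_, ?_, ?_, ?_, ?_⟩
  · intro D
    rw [hres', hclm']
    by_cases hD : D = C
    · subst hD
      simp [Function.update_self, hresC, Set.inter_singleton_eq_empty, hmn', Ne.symm hmn']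
    · simp [Function.update_of_ne hD, hdisj D]
  · intro D; rw [hres']; exact hres2 D
  · intro D
    rw [hclm']
    by_cases hD : D = C
    · subst hD; simp
    · simp [Function.update_of_ne hD, hclm1 D]
  · intro D
    rw [hres', hclm']
    by_cases hD : D = C
    · subst hD
      simp [Function.update_self, hres1]
    · simp only [Function.update_of_ne hD]; exact hsum D
  · intro D hD
    rw [hres', hclm'] at *
    by_cases hDC : D = C
    · subst hDC
      rw [hresC, Function.update_self]
      rcases hmn with h | h
      · exact ⟨n, by rw [h]; ext x; simp⟩
      · exact ⟨m, by rw [← h]; ext x; simp; tauto⟩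
    · rw [Function.update_of_ne hDC] at hD ⊢
      exact hform D hD
  · rw [hres', hclm']
    apply Set.Finite.subset (hfin.union (Set.finite_singleton C))
    intro D hD
    by_cases hDC : D = C
    · right; exact hDC
    · left
      simpa [Function.update_of_ne hDC] using hD
end

section
/- If a traffic snapshot TS = (res, clm, pos, spd, acc) satisfies the sanity conditions and TS' = (res', clm', pos, spd, acc) is obtained from TS by the reservation-creation transition r(C) — i.e. clm' = clm except clm'(C) = ∅, and res' = res except res'(C) = res(C) ∪ clm(C) — then TS' also satisfies the sanity conditions. -/
/-- Preservation of sanity under the reservation-creation transition `r(C)`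
(Lemma 2.4, case of `TS → r(C) → TS'`). -/
theorem reservation_creation_preserves_sanity
    (TS TS' : TrafficSnapshot) (C : ℕ)
    (hsane : Sane TS)
    (hres' : TS'.res = Function.update TS.res C (TS.res C ∪ TS.clm C))
    (hclm' : TS'.clm = Function.update TS.clm C ∅)
    (hpos' : TS'.pos = TS.pos)
    (hspd' : TS'.spd = TS.spd)
    (hacc' : TS'.acc = TS.acc) :
    Sane TS' := by
  obtain ⟨h1, h2, h3, h4, h5, h6⟩ := hsane
  have hresfin : ∀ D, (TS.res D).Finite := by
    intro D
    by_contra h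
    have h0 : (TS.res D).ncard = 0 := Set.Infinite.ncard h
    have := (h2 D).1
    omega
  have hclmfin : ∀ D, (TS.clm D).Finite := by
    intro D
    by_cases h : TS.clm D = ∅
    · simp [h]
    · obtain ⟨n, hn⟩ := h5 D h
      have : TS.clm D ⊆ {n, n + 1} := hn ▸ Set.subset_union_right
      exact (Set.Finite.insert n (Set.finite_singleton (n + 1))).subset this
  have hdisj : ∀ D, Disjoint (TS.res D) (TS.clm D) :=
    fun D => Set.disjoint_iff_inter_eq_empty.mpr (h1 D)
  have huncard : (TS.res C ∪ TS.clm C).ncard =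
      (TS.res C).ncard + (TS.clm C).ncard :=
    Set.ncard_union_eq (hdisj C) (hresfin C) (hclmfin C)
  refine ⟨?_, ?_, ?_, ?_, ?_, ?_⟩
  · intro D
    rw [hres', hclm']
    rcases eq_or_ne D C with rfl | hne
    · simp
    · simp [Function.update_apply, hne, h1 D]
  · intro D
    rw [hres']
    rcases eq_or_ne D C with rfl | hne
    · simp only [Function.update_self, huncard]
      have := h4 D
      omega
    · simp [Function.update_apply, hne, h2 D]
  · intro D
    rw [hclm']
    rcases eq_or_ne D C with rfl | hne
    · simp
    · simp [Function.update_apply, hne, h3 D]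
  · intro D
    rw [hres', hclm']
    rcases eq_or_ne D C with rfl | hne
    · simp only [Function.update_self, huncard, Set.ncard_empty]
      have := h4 D
      omega
    · simp [Function.update_apply, hne, h4 D]
  · intro D hD
    rw [hclm'] at hD
    rcases eq_or_ne D C with rfl | hne
    · simp at hD
    · rw [hres', hclm']
      simp only [Function.update_apply, if_neg hne]
      exact h5 D (by simpa [Function.update_apply, hne] using hD)
  · rw [hres', hclm']
    apply Set.Finite.subset (h6.union (Set.finite_singleton C))
    intro D hD
    rcases eq_or_ne D C with rfl | hne
    · exact Or.inr rfl
    · left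
      simpa [Function.update_apply, hne] using hD
end

section
/- Let φ be a horizontally rigid EMLSL formula, i.e. φ is dynamically rigid (contains no spatial atom re(c) or cl(c)) and does not contain the length symbol ℓ as a term. Then for every traffic snapshot TS, every valuation ν, and all views V, V₁, V₂ such that V₁ and V₂ arise from horizontally chopping V (the extension [r,t] of V splits at some s into [r,s] for V₁ and [s,t] for V₂, lanes and owner unchanged): TS, V, ν ⊨ φ iff TS, V₁, ν ⊨ φ, and TS, V, ν ⊨ φ iff TS, V₂, ν ⊨ φ. -/
/-- A view (Definition 2.5): a discrete (convex, finite) interval of lanes,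
a closed real extension `[lo, hi]` and an owner. -/
structure View where
  lanes : Set ℕ
  lo : ℝ
  hi : ℝ
  own : ℕ
  lanes_conv : ∀ a b c : ℕ, a ∈ lanes → c ∈ lanes → a ≤ b → b ≤ c → b ∈ lanes
  lanes_fin : lanes.Finite
  lo_le_hi : lo ≤ hi

/-- A sensor function `Ω`:  `Ω E C TS` is the length of car `C` in snapshot `TS`
as perceived by the car `E` (Definition 2.6). -/
def Sensor : Type := ℕ → ℕ → TrafficSnapshot → ℝ

/-- Vertical chopping of views (Definitions 2.9, 2.10). -/
def VChop (V1 V2 V : View) : Prop :=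
  V1.lanes ∪ V2.lanes = V.lanes ∧ Disjoint V1.lanes V2.lanes ∧
  (∀ a ∈ V1.lanes, ∀ b ∈ V2.lanes, a < b) ∧
  V1.lo = V.lo ∧ V1.hi = V.hi ∧ V2.lo = V.lo ∧ V2.hi = V.hi ∧
  V1.own = V.own ∧ V2.own = V.own

/-- Horizontal chopping of views (Definition 2.10). -/
def HChop (V1 V2 V : View) : Prop :=
  ∃ s : ℝ, V.lo ≤ s ∧ s ≤ V.hi ∧
    V1.lanes = V.lanes ∧ V2.lanes = V.lanes ∧
    V1.lo = V.lo ∧ V1.hi = s ∧ V2.lo = s ∧ V2.hi = V.hi ∧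
    V1.own = V.own ∧ V2.own = V.own

/-- The claim-creation transition `TS → c(C,n) → TS'` (Definition 2.3). -/
def ClmCreate (TS : TrafficSnapshot) (C n : ℕ) (TS' : TrafficSnapshot) : Prop :=
  TS.clm C = ∅ ∧ (TS.res C).ncard = 1 ∧
  (∃ m ∈ TS.res C, m = n + 1 ∨ n = m + 1) ∧
  TS'.res = TS.res ∧ TS'.clm = Function.update TS.clm C {n} ∧
  TS'.pos = TS.pos ∧ TS'.spd = TS.spd ∧ TS'.acc = TS.acc

/-- The claim-withdrawal transition `TS → wd c(C) → TS'` (Definition 2.3). -/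
def ClmWithdraw (TS : TrafficSnapshot) (C : ℕ) (TS' : TrafficSnapshot) : Prop :=
  TS'.res = TS.res ∧ TS'.clm = Function.update TS.clm C ∅ ∧
  TS'.pos = TS.pos ∧ TS'.spd = TS.spd ∧ TS'.acc = TS.acc

/-- The reservation-creation transition `TS → r(C) → TS'` (Definition 2.3). -/
def ResCreate (TS : TrafficSnapshot) (C : ℕ) (TS' : TrafficSnapshot) : Prop :=
  TS'.res = Function.update TS.res C (TS.res C ∪ TS.clm C) ∧
  TS'.clm = Function.update TS.clm C ∅ ∧
  TS'.pos = TS.pos ∧ TS'.spd = TS.spd ∧ TS'.acc = TS.acc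

/-- The reservation-withdrawal transition `TS → wd r(C,n) → TS'` (Definition 2.3). -/
def ResWithdraw (TS : TrafficSnapshot) (C n : ℕ) (TS' : TrafficSnapshot) : Prop :=
  n ∈ TS.res C ∧ (TS.res C).ncard = 2 ∧
  TS'.res = Function.update TS.res C {n} ∧ TS'.clm = TS.clm ∧
  TS'.pos = TS.pos ∧ TS'.spd = TS.spd ∧ TS'.acc = TS.acc

/-- The passing of time by `t ≥ 0` (Definition 2.3). -/
def TimePass (t : ℝ) (TS TS' : TrafficSnapshot) : Prop :=
  TS'.res = TS.res ∧ TS'.clm = TS.clm ∧ TS'.acc = TS.acc ∧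
  (∀ C, TS'.pos C = TS.pos C + TS.spd C * t + (1 / 2) * TS.acc C * t ^ 2) ∧
  (∀ C, TS'.spd C = TS.spd C + TS.acc C * t)

/-- The acceleration transition `TS → acc(C,a) → TS'` (Definition 2.3). -/
def AccSet (TS : TrafficSnapshot) (C : ℕ) (a : ℝ) (TS' : TrafficSnapshot) : Prop :=
  TS'.res = TS.res ∧ TS'.clm = TS.clm ∧ TS'.pos = TS.pos ∧ TS'.spd = TS.spd ∧
  TS'.acc = Function.update TS.acc C a

/-- Evolutions: finite interleavings of time passage and acceleration changes. -/
def Evolve : TrafficSnapshot → TrafficSnapshot → Prop :=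
  Relation.ReflTransGen
    (fun TS TS' => (∃ t : ℝ, 0 ≤ t ∧ TimePass t TS TS') ∨ ∃ C a, AccSet TS C a TS')

/-- Moving a view: shift the extension by `d` (Definition 2.8). -/
def View.shift (V : View) (d : ℝ) : View :=
  { V with lo := V.lo + d, hi := V.hi + d,
           lo_le_hi := by have := V.lo_le_hi; linarith }

/-- Car-sorted terms: variables and the constant `ego`. -/
inductive CTerm : Type
  | ego : CTerm
  | var (x : ℕ) : CTerm

/-- Real-sorted terms: real constants, real variables, the length symbol `ℓ`,
and sums (Definition 2.11). -/
inductive RTerm : Type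
  | const (r : ℝ) : RTerm
  | var (x : ℕ) : RTerm
  | len : RTerm
  | add (t u : RTerm) : RTerm

/-- Lane-sorted terms: lane constants, lane variables, the width symbol `ω`,
and sums (Definition 2.11). -/
inductive LTerm : Type
  | const (n : ℕ) : LTerm
  | var (x : ℕ) : LTerm
  | wid : LTerm
  | add (t u : LTerm) : LTerm

/-- EMLSL formulas (Definition 2.11). -/
inductive Formula : Type
  | bot : Formula
  | eqC (t u : CTerm) : Formula
  | eqR (t u : RTerm) : Formula
  | eqL (t u : LTerm) : Formula
  | re (c : CTerm) : Formula
  | cl (c : CTerm) : Formula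
  | imp (p q : Formula) : Formula
  | allC (x : ℕ) (p : Formula) : Formula
  | allR (x : ℕ) (p : Formula) : Formula
  | allL (x : ℕ) (p : Formula) : Formula
  | hchop (p q : Formula) : Formula
  | vchop (p q : Formula) : Formula
  | boxRes (c : CTerm) (p : Formula) : Formula
  | boxClm (c : CTerm) (p : Formula) : Formula
  | boxWdRes (c : CTerm) (p : Formula) : Formula
  | boxWdClm (c : CTerm) (p : Formula) : Formula
  | boxTau (p : Formula) : Formula

/-- A valuation (Definition 2.12): sorted assignments to the variables
together with the value of `ego`. -/
structure Valu : Type where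
  car : ℕ → ℕ
  real : ℕ → ℝ
  lane : ℕ → ℕ
  egoCar : ℕ

def evalC (ν : Valu) : CTerm → ℕ
  | .ego => ν.egoCar
  | .var x => ν.car x

def evalR (ν : Valu) (V : View) : RTerm → ℝ
  | .const r => r
  | .var x => ν.real x
  | .len => V.hi - V.lo
  | .add t u => evalR ν V t + evalR ν V u

noncomputable def evalL (ν : Valu) (V : View) : LTerm → ℕ
  | .const n => n
  | .var x => ν.lane x
  | .wid => V.lanes.ncard
  | .add t u => evalL ν V t + evalL ν V u

def Valu.updC (ν : Valu) (x a : ℕ) : Valu := { ν with car := Function.update ν.car x a }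
def Valu.updR (ν : Valu) (x : ℕ) (a : ℝ) : Valu := { ν with real := Function.update ν.real x a }
def Valu.updL (ν : Valu) (x a : ℕ) : Valu := { ν with lane := Function.update ν.lane x a }

/-- The satisfaction relation `TS, V, ν ⊨ φ` of Definition 2.13, relative to
a sensor function `Ω`. -/
def Sat (Ω : Sensor) : Formula → TrafficSnapshot → View → Valu → Prop
  | .bot, _, _, _ => False
  | .eqC t u, _, _, ν => evalC ν t = evalC ν u
  | .eqR t u, _, V, ν => evalR ν V t = evalR ν V u
  | .eqL t u, _, V, ν => evalL ν V t = evalL ν V u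
  | .re c, TS, V, ν =>
      V.lanes.ncard = 1 ∧ V.lo < V.hi ∧
      TS.res (evalC ν c) ∩ V.lanes = V.lanes ∧
      Set.Icc V.lo V.hi =
        Set.Icc (TS.pos (evalC ν c)) (TS.pos (evalC ν c) + Ω V.own (evalC ν c) TS) ∩
          Set.Icc V.lo V.hi
  | .cl c, TS, V, ν =>
      V.lanes.ncard = 1 ∧ V.lo < V.hi ∧
      TS.clm (evalC ν c) ∩ V.lanes = V.lanes ∧
      Set.Icc V.lo V.hi =
        Set.Icc (TS.pos (evalC ν c)) (TS.pos (evalC ν c) + Ω V.own (evalC ν c) TS) ∩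
          Set.Icc V.lo V.hi
  | .imp p q, TS, V, ν => Sat Ω p TS V ν → Sat Ω q TS V ν
  | .allC x p, TS, V, ν => ∀ a : ℕ, Sat Ω p TS V (ν.updC x a)
  | .allR x p, TS, V, ν => ∀ a : ℝ, Sat Ω p TS V (ν.updR x a)
  | .allL x p, TS, V, ν => ∀ a : ℕ, Sat Ω p TS V (ν.updL x a)
  | .hchop p q, TS, V, ν =>
      ∃ V1 V2 : View, HChop V1 V2 V ∧ Sat Ω p TS V1 ν ∧ Sat Ω q TS V2 ν
  | .vchop p q, TS, V, ν =>
      ∃ V1 V2 : View, VChop V1 V2 V ∧ Sat Ω p TS V1 ν ∧ Sat Ω q TS V2 ν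
  | .boxRes c p, TS, V, ν =>
      ∀ TS' : TrafficSnapshot, ResCreate TS (evalC ν c) TS' → Sat Ω p TS' V ν
  | .boxClm c p, TS, V, ν =>
      ∀ (TS' : TrafficSnapshot) (n : ℕ), ClmCreate TS (evalC ν c) n TS' → Sat Ω p TS' V ν
  | .boxWdRes c p, TS, V, ν =>
      ∀ (TS' : TrafficSnapshot) (n : ℕ), ResWithdraw TS (evalC ν c) n TS' → Sat Ω p TS' V ν
  | .boxWdClm c p, TS, V, ν =>
      ∀ TS' : TrafficSnapshot, ClmWithdraw TS (evalC ν c) TS' → Sat Ω p TS' V ν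
  | .boxTau p, TS, V, ν =>
      ∀ TS' : TrafficSnapshot, Evolve TS TS' →
        Sat Ω p TS' (V.shift (TS'.pos V.own - TS.pos V.own)) ν

/-- A formula is dynamically rigid if it contains no spatial atom `re(c)` or
`cl(c)` as a subformula (Definition 2.15). -/
def Formula.dynRigid : Formula → Prop
  | .bot => True
  | .eqC _ _ => True
  | .eqR _ _ => True
  | .eqL _ _ => True
  | .re _ => False
  | .cl _ => False
  | .imp p q => p.dynRigid ∧ q.dynRigid
  | .allC _ p => p.dynRigid
  | .allR _ p => p.dynRigid
  | .allL _ p => p.dynRigid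
  | .hchop p q => p.dynRigid ∧ q.dynRigid
  | .vchop p q => p.dynRigid ∧ q.dynRigid
  | .boxRes _ p => p.dynRigid
  | .boxClm _ p => p.dynRigid
  | .boxWdRes _ p => p.dynRigid
  | .boxWdClm _ p => p.dynRigid
  | .boxTau p => p.dynRigid

/-- A real-sorted term does not contain the length symbol `ℓ`. -/
def RTerm.lenFree : RTerm → Prop
  | .const _ => True
  | .var _ => True
  | .len => False
  | .add t u => t.lenFree ∧ u.lenFree

/-- A lane-sorted term does not contain the width symbol `ω`. -/
def LTerm.widFree : LTerm → Prop
  | .const _ => True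
  | .var _ => True
  | .wid => False
  | .add t u => t.widFree ∧ u.widFree

/-- A formula does not contain the length symbol `ℓ` as a term. -/
def Formula.lenFree : Formula → Prop
  | .bot => True
  | .eqC _ _ => True
  | .eqR t u => t.lenFree ∧ u.lenFree
  | .eqL _ _ => True
  | .re _ => True
  | .cl _ => True
  | .imp p q => p.lenFree ∧ q.lenFree
  | .allC _ p => p.lenFree
  | .allR _ p => p.lenFree
  | .allL _ p => p.lenFree
  | .hchop p q => p.lenFree ∧ q.lenFree
  | .vchop p q => p.lenFree ∧ q.lenFree
  | .boxRes _ p => p.lenFree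
  | .boxClm _ p => p.lenFree
  | .boxWdRes _ p => p.lenFree
  | .boxWdClm _ p => p.lenFree
  | .boxTau p => p.lenFree

/-- A formula does not contain the width symbol `ω` as a term. -/
def Formula.widFree : Formula → Prop
  | .bot => True
  | .eqC _ _ => True
  | .eqR _ _ => True
  | .eqL t u => t.widFree ∧ u.widFree
  | .re _ => True
  | .cl _ => True
  | .imp p q => p.widFree ∧ q.widFree
  | .allC _ p => p.widFree
  | .allR _ p => p.widFree
  | .allL _ p => p.widFree
  | .hchop p q => p.widFree ∧ q.widFree
  | .vchop p q => p.widFree ∧ q.widFree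
  | .boxRes _ p => p.widFree
  | .boxClm _ p => p.widFree
  | .boxWdRes _ p => p.widFree
  | .boxWdClm _ p => p.widFree
  | .boxTau p => p.widFree

/-- Horizontal rigidity of formulas (Definition 2.15): dynamically rigid and
not containing `ℓ`. -/
def Formula.hRigid (p : Formula) : Prop := p.dynRigid ∧ p.lenFree

/-- Vertical rigidity of formulas (Definition 2.15): dynamically rigid and
not containing `ω`. -/
def Formula.vRigid (p : Formula) : Prop := p.dynRigid ∧ p.widFree

lemma evalR_lenFree (ν : Valu) (t : RTerm) (ht : t.lenFree) (V V' : View) :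
    evalR ν V t = evalR ν V' t := by
  induction t with
  | const r => rfl
  | var x => rfl
  | len => exact absurd ht not_false
  | add a b iha ihb =>
      obtain ⟨ha, hb⟩ := ht
      simp [evalR, iha ha, ihb hb]

/-- Degenerate left part of a view. -/
def View.degen (V : View) : View :=
  { V with hi := V.lo, lo_le_hi := le_refl _ }

/-- Replace the extension / owner data of a view, keeping the lanes. -/
def View.reext (W V : View) : View :=
  { lanes := W.lanes, lo := V.lo, hi := V.hi, own := V.own,
    lanes_conv := W.lanes_conv, lanes_fin := W.lanes_fin, lo_le_hi := V.lo_le_hi }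

lemma hRigid_sat_ext (Ω : Sensor) (φ : Formula) (hφ : φ.hRigid) :
    ∀ (TS : TrafficSnapshot) (V V' : View) (ν : Valu),
      V.lanes = V'.lanes → V.own = V'.own →
      (Sat Ω φ TS V ν ↔ Sat Ω φ TS V' ν) := by
  obtain ⟨hd, hl⟩ := hφ
  induction φ with
  | bot => intro _ _ _ _ _ _; rfl
  | eqC t u => intro _ _ _ _ _ _; rfl
  | eqR t u =>
      intro TS V V' ν _ _
      obtain ⟨ht, hu⟩ := hl
      simp only [Sat, evalR_lenFree ν t ht V V', evalR_lenFree ν u hu V V']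
  | eqL t u =>
      intro TS V V' ν hlanes _
      have key : ∀ s : LTerm, evalL ν V s = evalL ν V' s := by
        intro s; induction s with
        | const n => rfl
        | var x => rfl
        | wid => simp [evalL, hlanes]
        | add a b iha ihb => simp [evalL, iha, ihb]
      simp only [Sat, key]
  | re c => exact absurd hd not_false
  | cl c => exact absurd hd not_false
  | imp p q ihp ihq =>
      intro TS V V' ν h1 h2
      exact imp_congr (ihp hd.1 hl.1 TS V V' ν h1 h2) (ihq hd.2 hl.2 TS V V' ν h1 h2)
  | allC x p ih =>
      intro TS V V' ν h1 h2
      exact forall_congr' fun a => ih hd hl TS V V' _ h1 h2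
  | allR x p ih =>
      intro TS V V' ν h1 h2
      exact forall_congr' fun a => ih hd hl TS V V' _ h1 h2
  | allL x p ih =>
      intro TS V V' ν h1 h2
      exact forall_congr' fun a => ih hd hl TS V V' _ h1 h2
  | hchop p q ihp ihq =>
      intro TS V V' ν h1 h2
      constructor
      · rintro ⟨W1, W2, ⟨s, _, _, hW1l, hW2l, _, _, _, _, hW1o, hW2o⟩, hp, hq⟩
        refine ⟨V'.degen, V', ⟨V'.lo, le_refl _, V'.lo_le_hi, rfl, rfl, rfl, rfl, rfl, rfl, rfl, rfl⟩, ?_, ?_⟩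
        · exact (ihp hd.1 hl.1 TS W1 V'.degen ν (hW1l.trans h1) (hW1o.trans h2)).mp hp
        · exact (ihq hd.2 hl.2 TS W2 V' ν (hW2l.trans h1) (hW2o.trans h2)).mp hq
      · rintro ⟨W1, W2, ⟨s, _, _, hW1l, hW2l, _, _, _, _, hW1o, hW2o⟩, hp, hq⟩
        refine ⟨V.degen, V, ⟨V.lo, le_refl _, V.lo_le_hi, rfl, rfl, rfl, rfl, rfl, rfl, rfl, rfl⟩, ?_, ?_⟩
        · exact (ihp hd.1 hl.1 TS W1 V.degen ν (hW1l.trans h1.symm) (hW1o.trans h2.symm)).mp hp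
        · exact (ihq hd.2 hl.2 TS W2 V ν (hW2l.trans h1.symm) (hW2o.trans h2.symm)).mp hq
  | vchop p q ihp ihq =>
      intro TS V V' ν h1 h2
      constructor
      · rintro ⟨W1, W2, ⟨hu, hdis, hord, _, _, _, _, hW1o, hW2o⟩, hp, hq⟩
        refine ⟨W1.reext V', W2.reext V',
          ⟨by simpa [View.reext, h1] using hu, hdis, hord, rfl, rfl, rfl, rfl, rfl, rfl⟩, ?_, ?_⟩
        · exact (ihp hd.1 hl.1 TS W1 (W1.reext V') ν rfl (hW1o.trans h2)).mp hp
        · exact (ihq hd.2 hl.2 TS W2 (W2.reext V') ν rfl (hW2o.trans h2)).mp hq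
      · rintro ⟨W1, W2, ⟨hu, hdis, hord, _, _, _, _, hW1o, hW2o⟩, hp, hq⟩
        refine ⟨W1.reext V, W2.reext V,
          ⟨by simpa [View.reext, h1] using hu, hdis, hord, rfl, rfl, rfl, rfl, rfl, rfl⟩, ?_, ?_⟩
        · exact (ihp hd.1 hl.1 TS W1 (W1.reext V) ν rfl (hW1o.trans h2.symm)).mp hp
        · exact (ihq hd.2 hl.2 TS W2 (W2.reext V) ν rfl (hW2o.trans h2.symm)).mp hq
  | boxRes c p ih =>
      intro TS V V' ν h1 h2
      exact forall_congr' fun TS' => imp_congr Iff.rfl (ih hd hl TS' V V' ν h1 h2)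
  | boxClm c p ih =>
      intro TS V V' ν h1 h2
      exact forall_congr' fun TS' => forall_congr' fun n =>
        imp_congr Iff.rfl (ih hd hl TS' V V' ν h1 h2)
  | boxWdRes c p ih =>
      intro TS V V' ν h1 h2
      exact forall_congr' fun TS' => forall_congr' fun n =>
        imp_congr Iff.rfl (ih hd hl TS' V V' ν h1 h2)
  | boxWdClm c p ih =>
      intro TS V V' ν h1 h2
      exact forall_congr' fun TS' => imp_congr Iff.rfl (ih hd hl TS' V V' ν h1 h2)
  | boxTau p ih =>
      intro TS V V' ν h1 h2
      refine forall_congr' fun TS' => imp_congr Iff.rfl ?_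
      rw [h2]
      exact ih hd hl TS' (V.shift _) (V'.shift _) ν h1 h2

/-- Lemma 2.16(2): a horizontally rigid formula (dynamically rigid and without
the length symbol `ℓ`) has the same truth value on a view and on both parts of
any horizontal chop of that view. -/
theorem hRigid_hchop_independent
    (Ω : Sensor) (φ : Formula) (hφ : φ.hRigid)
    (TS : TrafficSnapshot) (V V1 V2 : View) (ν : Valu)
    (hego : ν.egoCar = V.own)
    (hchop : HChop V1 V2 V) :
    (Sat Ω φ TS V ν ↔ Sat Ω φ TS V1 ν) ∧ (Sat Ω φ TS V ν ↔ Sat Ω φ TS V2 ν) := by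
  obtain ⟨s, _, _, h1l, h2l, _, _, _, _, h1o, h2o⟩ := hchop
  exact ⟨hRigid_sat_ext Ω φ hφ TS V V1 ν h1l.symm h1o.symm,
         hRigid_sat_ext Ω φ hφ TS V V2 ν h2l.symm h2o.symm⟩
end

section
/- Let φ be a vertically rigid EMLSL formula, i.e. φ is dynamically rigid (contains no spatial atom re(c) or cl(c)) and does not contain the width symbol ω as a term. Then for every traffic snapshot TS, every valuation ν, and all views V, V₁, V₂ such that V₁ and V₂ arise from vertically chopping V (the lane interval of V splits into two disjoint, possibly empty, adjacent discrete intervals giving V₁ (lower) and V₂ (upper), extension and owner unchanged): TS, V, ν ⊨ φ iff TS, V₁, ν ⊨ φ, and TS, V, ν ⊨ φ iff TS, V₂, ν ⊨ φ. -/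
lemma evalR_ext (ν : Valu) (V W : View) (hlo : V.lo = W.lo) (hhi : V.hi = W.hi) :
    ∀ t, evalR ν V t = evalR ν W t := by
  intro t; induction t <;> simp [evalR, *]

lemma evalL_ext (ν : Valu) (V W : View) :
    ∀ t, t.widFree → evalL ν V t = evalL ν W t := by
  intro t ht
  induction t with
  | const n => rfl
  | var x => rfl
  | wid => exact absurd ht id
  | add t u iht ihu =>
      obtain ⟨h1, h2⟩ := ht
      simp [evalL, iht h1, ihu h2]

lemma sat_ext (Ω : Sensor) :
    ∀ φ : Formula, φ.vRigid →
      ∀ (TS : TrafficSnapshot) (V W : View) (ν : Valu),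
        V.lo = W.lo → V.hi = W.hi → V.own = W.own →
        (Sat Ω φ TS V ν ↔ Sat Ω φ TS W ν) := by
  intro φ
  induction φ with
  | bot => intro _ TS V W ν _ _ _; exact Iff.rfl
  | eqC t u => intro _ TS V W ν _ _ _; exact Iff.rfl
  | eqR t u =>
      intro _ TS V W ν hlo hhi _
      simp only [Sat, evalR_ext ν V W hlo hhi]
  | eqL t u =>
      intro h TS V W ν _ _ _
      obtain ⟨_, h1, h2⟩ := h
      simp only [Sat, evalL_ext ν V W t h1, evalL_ext ν V W u h2]
  | re c => intro h; exact absurd h.1 id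
  | cl c => intro h; exact absurd h.1 id
  | imp p q ihp ihq =>
      intro h TS V W ν hlo hhi hown
      exact imp_congr (ihp ⟨h.1.1, h.2.1⟩ TS V W ν hlo hhi hown)
        (ihq ⟨h.1.2, h.2.2⟩ TS V W ν hlo hhi hown)
  | allC x p ih =>
      intro h TS V W ν hlo hhi hown
      exact forall_congr' fun a => ih ⟨h.1, h.2⟩ TS V W _ hlo hhi hown
  | allR x p ih =>
      intro h TS V W ν hlo hhi hown
      exact forall_congr' fun a => ih ⟨h.1, h.2⟩ TS V W _ hlo hhi hown
  | allL x p ih =>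
      intro h TS V W ν hlo hhi hown
      exact forall_congr' fun a => ih ⟨h.1, h.2⟩ TS V W _ hlo hhi hown
  | hchop p q ihp ihq =>
      intro h TS V W ν hlo hhi hown
      have hp : p.vRigid := ⟨h.1.1, h.2.1⟩
      have hq : q.vRigid := ⟨h.1.2, h.2.2⟩
      constructor
      · rintro ⟨V1, V2, ⟨s, hs1, hs2, hrest⟩, hsp, hsq⟩
        obtain ⟨_, _, l1, h1, l2, h2, o1, o2⟩ := hrest
        refine ⟨⟨W.lanes, W.lo, s, W.own, W.lanes_conv, W.lanes_fin, by rw [← hlo]; exact hs1⟩,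
          ⟨W.lanes, s, W.hi, W.own, W.lanes_conv, W.lanes_fin, by rw [← hhi]; exact hs2⟩,
          ⟨s, by rw [← hlo]; exact hs1, by rw [← hhi]; exact hs2, rfl, rfl, rfl, rfl, rfl, rfl,
            rfl, rfl⟩, ?_, ?_⟩
        · exact (ihp hp TS V1 _ ν (by simp [l1, hlo]) (by simp [h1]) (by simp [o1, hown])).mp hsp
        · exact (ihq hq TS V2 _ ν (by simp [l2]) (by simp [h2, hhi]) (by simp [o2, hown])).mp hsq
      · rintro ⟨V1, V2, ⟨s, hs1, hs2, hrest⟩, hsp, hsq⟩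
        obtain ⟨_, _, l1, h1, l2, h2, o1, o2⟩ := hrest
        refine ⟨⟨V.lanes, V.lo, s, V.own, V.lanes_conv, V.lanes_fin, by rw [hlo]; exact hs1⟩,
          ⟨V.lanes, s, V.hi, V.own, V.lanes_conv, V.lanes_fin, by rw [hhi]; exact hs2⟩,
          ⟨s, by rw [hlo]; exact hs1, by rw [hhi]; exact hs2, rfl, rfl, rfl, rfl, rfl, rfl,
            rfl, rfl⟩, ?_, ?_⟩
        · exact (ihp hp TS V1 _ ν (by simp [l1, hlo]) (by simp [h1]) (by simp [o1, hown])).mp hsp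
        · exact (ihq hq TS V2 _ ν (by simp [l2]) (by simp [h2, hhi]) (by simp [o2, hown])).mp hsq
  | vchop p q ihp ihq =>
      intro h TS V W ν hlo hhi hown
      have hp : p.vRigid := ⟨h.1.1, h.2.1⟩
      have hq : q.vRigid := ⟨h.1.2, h.2.2⟩
      constructor
      · rintro ⟨V1, V2, ⟨_, _, _, l1, h1, l2, h2, o1, o2⟩, hsp, hsq⟩
        refine ⟨⟨∅, W.lo, W.hi, W.own, by simp, Set.finite_empty, W.lo_le_hi⟩,
          ⟨W.lanes, W.lo, W.hi, W.own, W.lanes_conv, W.lanes_fin, W.lo_le_hi⟩,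
          ⟨by simp, by simp, by simp, rfl, rfl, rfl, rfl, rfl, rfl⟩, ?_, ?_⟩
        · exact (ihp hp TS V1 _ ν (by simp [l1, hlo]) (by simp [h1, hhi])
            (by simp [o1, hown])).mp hsp
        · exact (ihq hq TS V2 _ ν (by simp [l2, hlo]) (by simp [h2, hhi])
            (by simp [o2, hown])).mp hsq
      · rintro ⟨V1, V2, ⟨_, _, _, l1, h1, l2, h2, o1, o2⟩, hsp, hsq⟩
        refine ⟨⟨∅, V.lo, V.hi, V.own, by simp, Set.finite_empty, V.lo_le_hi⟩,
          ⟨V.lanes, V.lo, V.hi, V.own, V.lanes_conv, V.lanes_fin, V.lo_le_hi⟩,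
          ⟨by simp, by simp, by simp, rfl, rfl, rfl, rfl, rfl, rfl⟩, ?_, ?_⟩
        · exact (ihp hp TS V1 _ ν (by simp [l1, hlo]) (by simp [h1, hhi])
            (by simp [o1, hown])).mp hsp
        · exact (ihq hq TS V2 _ ν (by simp [l2, hlo]) (by simp [h2, hhi])
            (by simp [o2, hown])).mp hsq
  | boxRes c p ih =>
      intro h TS V W ν hlo hhi hown
      exact forall_congr' fun TS' => imp_congr Iff.rfl
        (ih ⟨h.1, h.2⟩ TS' V W ν hlo hhi hown)
  | boxClm c p ih =>
      intro h TS V W ν hlo hhi hown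
      exact forall_congr' fun TS' => forall_congr' fun n => imp_congr Iff.rfl
        (ih ⟨h.1, h.2⟩ TS' V W ν hlo hhi hown)
  | boxWdRes c p ih =>
      intro h TS V W ν hlo hhi hown
      exact forall_congr' fun TS' => forall_congr' fun n => imp_congr Iff.rfl
        (ih ⟨h.1, h.2⟩ TS' V W ν hlo hhi hown)
  | boxWdClm c p ih =>
      intro h TS V W ν hlo hhi hown
      exact forall_congr' fun TS' => imp_congr Iff.rfl
        (ih ⟨h.1, h.2⟩ TS' V W ν hlo hhi hown)
  | boxTau p ih =>
      intro h TS V W ν hlo hhi hown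
      refine forall_congr' fun TS' => ?_
      rw [hown]
      exact imp_congr Iff.rfl
        (ih ⟨h.1, h.2⟩ TS' _ _ ν (by simp [View.shift, hlo])
          (by simp [View.shift, hhi]) (by simp [View.shift, hown]))

/-- Lemma 2.16(3): a vertically rigid formula (dynamically rigid and without
the width symbol `ω`) has the same truth value on a view and on both parts of
any vertical chop of that view. -/
theorem vRigid_vchop_independent
    (Ω : Sensor) (φ : Formula) (hφ : φ.vRigid)
    (TS : TrafficSnapshot) (V V1 V2 : View) (ν : Valu)
    (hego : ν.egoCar = V.own)
    (hchop : VChop V1 V2 V) :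
    (Sat Ω φ TS V ν ↔ Sat Ω φ TS V1 ν) ∧ (Sat Ω φ TS V ν ↔ Sat Ω φ TS V2 ν) := by
  obtain ⟨_, _, _, l1, h1, l2, h2, o1, o2⟩ := hchop
  exact ⟨(sat_ext Ω φ hφ TS V V1 ν l1.symm h1.symm o1.symm),
    (sat_ext Ω φ hφ TS V V2 ν l2.symm h2.symm o2.symm)⟩
end
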